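/- Let $b_l > 0$, $w_l > 0$, $\epsilon > 0$ and consider minimizing $f(\mathbf{r}) = \sum_{l=1}^M \frac{w_l e^{-r_l\epsilon}}{r_l} e^{(\sum_i r_i)\epsilon}(1 + \sum_i r_i) + \sum_l w_l$ over $r_l > 0$ subject to $r_l \leq b_l(\sum_i r_i + 1)$ for all $l$. If $\sum_{i=1}^M b_i \geq 1$ and $\beta^\star$ satisfies $\sum_i \min\{b_i, \beta^\star\sqrt{w_i}\} = 1$, then the infimum of $f$ is at least $\sum_{i=1}^M \left[\frac{w_i}{\min\{b_i, \beta^\star\sqrt{w_i}\}} + w_i\right]$. -/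

import Mathlib

/-!
Put `x i = r i / (1 + ∑ r)`. The constraints say `x ≤ b` and `∑ x ≤ 1`, and since the exponential
factor `exp ((∑ r - r l) ε)` is at least `1`, the objective is at least `∑ w i / x i + ∑ w i`.
The point `m i = min (b i) (β⋆ √(w i))` minimises the convex function `∑ w i / x i` on that
polytope: it satisfies the KKT conditions with multiplier `1 / β⋆²` for `∑ x ≤ 1`, because
`w i / m i² = 1 / β⋆²` unless `m i = b i`, where the constraint `x i ≤ b i` is active.
-/

open Finset Real

lemma inv_sub_div_sq_le_inv {x m : ℝ} (hx : 0 < x) (hm : 0 < m) :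
    m⁻¹ - (x - m) / m ^ 2 ≤ x⁻¹ := by
  have key : x⁻¹ - (m⁻¹ - (x - m) / m ^ 2) = (x - m) ^ 2 / (x * m ^ 2) := by
    field_simp
    ring
  have : 0 ≤ (x - m) ^ 2 / (x * m ^ 2) := by positivity
  linarith

lemma div_sub_mul_sub_le_div {w m x c : ℝ} (hw : 0 ≤ w) (hm : 0 < m) (hx : 0 < x)
    (hkkt : (w / m ^ 2 - c) * (x - m) ≤ 0) :
    w / m - c * (x - m) ≤ w / x := by
  have tangent := mul_le_mul_of_nonneg_left (inv_sub_div_sq_le_inv hx hm) hw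
  calc w / m - c * (x - m) ≤ w / m - c * (x - m) - (w / m ^ 2 - c) * (x - m) := by linarith
    _ = w * (m⁻¹ - (x - m) / m ^ 2) := by ring
    _ ≤ w * x⁻¹ := tangent
    _ = w / x := (div_eq_mul_inv w x).symm

lemma sum_div_le_sum_div_of_kkt {ι : Type*} {s : Finset ι} {w m x : ι → ℝ} {c : ℝ}
    (hw : ∀ i ∈ s, 0 ≤ w i) (hm : ∀ i ∈ s, 0 < m i) (hx : ∀ i ∈ s, 0 < x i) (hc : 0 ≤ c)
    (hkkt : ∀ i ∈ s, (w i / m i ^ 2 - c) * (x i - m i) ≤ 0)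
    (hsum : ∑ i ∈ s, x i ≤ ∑ i ∈ s, m i) :
    ∑ i ∈ s, w i / m i ≤ ∑ i ∈ s, w i / x i := by
  have termwise : ∑ i ∈ s, (w i / m i - c * (x i - m i)) ≤ ∑ i ∈ s, w i / x i :=
    sum_le_sum fun i hi => div_sub_mul_sub_le_div (hw i hi) (hm i hi) (hx i hi) (hkkt i hi)
  rw [sum_sub_distrib, ← mul_sum, sum_sub_distrib] at termwise
  linarith [mul_nonpos_of_nonneg_of_nonpos hc (sub_nonpos.2 hsum)]

lemma kkt_min_mul_sqrt {b w β x : ℝ} (hb : 0 < b) (hw : 0 < w) (hβ : 0 < β) (hxb : x ≤ b) :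
    (w / min b (β * √w) ^ 2 - 1 / β ^ 2) * (x - min b (β * √w)) ≤ 0 := by
  have hβw : (β * √w) ^ 2 = β ^ 2 * w := by rw [mul_pow, sq_sqrt hw.le]
  rcases le_or_gt x (min b (β * √w)) with hxm | hmx
  · have hm : 0 < min b (β * √w) := lt_min hb (by positivity)
    have hm_sq : min b (β * √w) ^ 2 ≤ β ^ 2 * w :=
      hβw ▸ pow_le_pow_left₀ hm.le (min_le_right _ _) 2
    have : 1 / β ^ 2 ≤ w / min b (β * √w) ^ 2 := by
      rw [div_le_div_iff₀ (by positivity) (by positivity)]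
      linarith
    exact mul_nonpos_of_nonneg_of_nonpos (by linarith) (by linarith)
  · have hm : min b (β * √w) = β * √w :=
      min_eq_right (not_lt.mp fun h => by rw [min_eq_left h.le] at hmx; linarith)
    rw [hm, hβw]
    field_simp
    simp

lemma pos_of_sum_min_mul_eq_one {ι : Type*} {s : Finset ι} {b c : ι → ℝ} {β : ℝ}
    (hc : ∀ i ∈ s, 0 ≤ c i) (h : ∑ i ∈ s, min (b i) (β * c i) = 1) : 0 < β := by
  by_contra! hβ
  have : ∑ i ∈ s, min (b i) (β * c i) ≤ 0 :=
    sum_nonpos fun i hi => (min_le_right _ _).trans (mul_nonpos_of_nonpos_of_nonneg hβ (hc i hi))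
  linarith

lemma le_mul_exp_neg_mul_mul_exp {a r S ε : ℝ} (ha : 0 ≤ a) (hε : 0 ≤ ε) (hrS : r ≤ S) :
    a ≤ a * exp (-(r * ε)) * exp (S * ε) := by
  rw [mul_assoc, ← exp_add]
  exact le_mul_of_one_le_right ha (one_le_exp (by nlinarith))

theorem objective_lower_bound_general (M : ℕ)
    (b w : Fin M → ℝ) (hb : ∀ l, 0 < b l) (hw : ∀ l, 0 < w l)
    (ε : ℝ) (hε : 0 < ε)
    (βs : ℝ) (hβ : ∑ i, min (b i) (βs * Real.sqrt (w i)) = 1) :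
    ∀ r : Fin M → ℝ, (∀ l, 0 < r l) →
      (∀ l, r l ≤ b l * (∑ i, r i + 1)) →
      ∑ i, (w i / min (b i) (βs * Real.sqrt (w i)) + w i)
        ≤ ∑ l, (w l * Real.exp (-(r l * ε)) / r l)
            * Real.exp ((∑ i, r i) * ε) * (1 + ∑ i, r i) + ∑ l, w l := by
  intro r hr hcon
  set S := ∑ i, r i
  have hS : 0 < 1 + S := by linarith [sum_nonneg fun i (_ : i ∈ univ) => (hr i).le]
  have hβs : 0 < βs := pos_of_sum_min_mul_eq_one (fun i _ => sqrt_nonneg (w i)) hβ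
  have hxb : ∀ i, r i / (1 + S) ≤ b i := fun i => by
    rw [div_le_iff₀ hS]; linarith [hcon i]
  have hx_sum : ∑ i, r i / (1 + S) ≤ ∑ i, min (b i) (βs * √(w i)) := by
    rw [hβ, ← sum_div, div_le_one hS]; linarith
  have relaxed : ∑ i, w i / min (b i) (βs * √(w i)) ≤ ∑ i, w i / (r i / (1 + S)) :=
    sum_div_le_sum_div_of_kkt (fun i _ => (hw i).le)
      (fun i _ => lt_min (hb i) (by have := hw i; positivity))
      (fun i _ => div_pos (hr i) hS) (by positivity)
      (fun i _ => kkt_min_mul_sqrt (hb i) (hw i) hβs (hxb i)) hx_sum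
  have exp_factor : ∀ l, w l / (r l / (1 + S))
      ≤ w l * exp (-(r l * ε)) / r l * exp (S * ε) * (1 + S) := fun l => by
    rw [div_div_eq_mul_div, mul_div_right_comm, mul_div_right_comm (w l)]
    exact mul_le_mul_of_nonneg_right (le_mul_exp_neg_mul_mul_exp (div_pos (hw l) (hr l)).le
      hε.le (single_le_sum (fun i _ => (hr i).le) (mem_univ l))) hS.le
  rw [sum_add_distrib]
  linarith [sum_le_sum fun l (_ : l ∈ univ) => exp_factor l]

theorem objective_lower_bound (M : ℕ) (hM : 0 < M)
    (b w : Fin M → ℝ) (hb : ∀ l, 0 < b l) (hw : ∀ l, 0 < w l)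
    (ε : ℝ) (hε : 0 < ε)
    (hsum : 1 ≤ ∑ i, b i)
    (βs : ℝ) (hβ : ∑ i, min (b i) (βs * Real.sqrt (w i)) = 1) :
    ∀ r : Fin M → ℝ, (∀ l, 0 < r l) →
      (∀ l, r l ≤ b l * (∑ i, r i + 1)) →
      ∑ i, (w i / min (b i) (βs * Real.sqrt (w i)) + w i)
        ≤ ∑ l, (w l * Real.exp (-(r l * ε)) / r l)
            * Real.exp ((∑ i, r i) * ε) * (1 + ∑ i, r i) + ∑ l, w l :=
  objective_lower_bound_general M b w hb hw ε hε βs hβ
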